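/- Let f(β) = Σᵢ log₂ mᵢ(β) where mᵢ(β) = η²(-2β + λᵢ² + √(λᵢ⁴ - 4βλᵢ²))/(3β) when β ≤ λᵢ²/4 and mᵢ(β) = 1 otherwise, with λ₁ ≥ … ≥ λ_P > 0. Then f is non-increasing in β on (0, ∞), so the budget equation f(β) = 2 log₂ M has at most one solution interval. -/
import Mathlib


private lemma aux_one_le (η l β : ℝ) (hη : 2 ≤ η) (hl : 0 < l) (hβ : 0 < β)
    (hb : β ≤ l ^ 2 / 4) :
    1 ≤ η ^ 2 * (-2 * β + l ^ 2 + Real.sqrt (l ^ 4 - 4 * β * l ^ 2)) / (3 * β) := by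
  have hs : 0 ≤ Real.sqrt (l ^ 4 - 4 * β * l ^ 2) := Real.sqrt_nonneg _
  rw [le_div_iff₀ (by linarith)]
  nlinarith [sq_nonneg η, sq_nonneg (η - 2)]

private lemma aux_mono (η l β₁ β₂ : ℝ) (hη : 2 ≤ η) (hl : 0 < l) (hβ₁ : 0 < β₁)
    (h12 : β₁ ≤ β₂) (hb₂ : β₂ ≤ l ^ 2 / 4) :
    η ^ 2 * (-2 * β₂ + l ^ 2 + Real.sqrt (l ^ 4 - 4 * β₂ * l ^ 2)) / (3 * β₂) ≤
    η ^ 2 * (-2 * β₁ + l ^ 2 + Real.sqrt (l ^ 4 - 4 * β₁ * l ^ 2)) / (3 * β₁) := by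
  have hβ₂ : 0 < β₂ := lt_of_lt_of_le hβ₁ h12
  have hs2 : 0 ≤ Real.sqrt (l ^ 4 - 4 * β₂ * l ^ 2) := Real.sqrt_nonneg _
  have hss : Real.sqrt (l ^ 4 - 4 * β₂ * l ^ 2) ≤ Real.sqrt (l ^ 4 - 4 * β₁ * l ^ 2) := by
    apply Real.sqrt_le_sqrt
    nlinarith
  rw [div_le_div_iff₀ (by linarith) (by linarith)]
  have key : β₁ * (l ^ 2 + Real.sqrt (l ^ 4 - 4 * β₂ * l ^ 2)) ≤
      β₂ * (l ^ 2 + Real.sqrt (l ^ 4 - 4 * β₁ * l ^ 2)) := by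
    nlinarith [mul_nonneg (sub_nonneg.mpr h12) hs2,
      mul_nonneg hβ₂.le (sub_nonneg.mpr hss)]
  nlinarith [mul_le_mul_of_nonneg_left key (by positivity : (0:ℝ) ≤ η ^ 2)]

/-- Monotonicity of the bit-budget function: with
`mᵢ(β) = η²(-2β + λᵢ² + √(λᵢ⁴ - 4βλᵢ²))/(3β)` for `β ≤ λᵢ²/4` and `mᵢ(β) = 1`
otherwise, the function `f(β) = Σᵢ log₂ mᵢ(β)` is non-increasing on `(0,∞)`. -/
theorem budget_function_antitone (P : ℕ) (η : ℝ) (hη : 2 ≤ η)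
    (lam : Fin P → ℝ) (hlam_pos : ∀ i, 0 < lam i) (hlam_mono : Antitone lam) :
    AntitoneOn
      (fun β : ℝ => ∑ i, Real.logb 2
        (if β ≤ (lam i) ^ 2 / 4 then
          η ^ 2 * (-2 * β + (lam i) ^ 2
            + Real.sqrt ((lam i) ^ 4 - 4 * β * (lam i) ^ 2)) / (3 * β)
        else 1))
      (Set.Ioi 0) := by
  intro β₁ hβ₁ β₂ hβ₂ h12
  simp only [Set.mem_Ioi] at hβ₁ hβ₂
  apply Finset.sum_le_sum
  intro i _
  set l := lam i with hl
  have hlp : 0 < l := hlam_pos i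
  by_cases h2 : β₂ ≤ l ^ 2 / 4
  · have h1 : β₁ ≤ l ^ 2 / 4 := le_trans h12 h2
    rw [if_pos h1, if_pos h2]
    have hone := aux_one_le η l β₂ hη hlp hβ₂ h2
    exact (Real.logb_le_logb one_lt_two (by linarith) (by
      have := aux_one_le η l β₁ hη hlp hβ₁ h1; linarith)).mpr
      (aux_mono η l β₁ β₂ hη hlp hβ₁ h12 h2)
  · rw [if_neg h2]
    by_cases h1 : β₁ ≤ l ^ 2 / 4
    · rw [if_pos h1]
      rw [Real.logb_one]
      exact Real.logb_nonneg one_lt_two (aux_one_le η l β₁ hη hlp hβ₁ h1)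
    · rw [if_neg h1]
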